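/- Let a, c > 0, b ∈ (0,1], m ∈ ℕ, and let (X_i)_{i≥1} be independent, nonnegative, square-integrable random variables on a probability space (Ω, 𝓕, P) such that Σ_i Var(X_i) < ∞ and such that for every n ≥ m, the set {i ∈ {1,…,n} : E[X_i] ≥ 1/(c·i)} has at least b·n elements. Then Σ_{i≤n} X_i → ∞ almost surely. -/

import Mathlib

/-!
Write `S n = ∑_{i ≤ n} X i`. The density condition makes the means `E[S n]` unbounded: going
from `n` to `N ≈ 2n/b` picks up at least `bN/2` new indices with `E[X i] ≥ 1/(cN)`, so the mean
grows by at least `b/(2c)`. The variances of the `S n` are bounded by `∑ Var(X i)`, so by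
Chebyshev `{S n ≤ M for all n}` has measure at most `∑ Var(X i) / t²` for every `t > 0`.
Hence `S n` is a.s. unbounded, and being nondecreasing it tends to infinity.
-/

open MeasureTheory Filter ProbabilityTheory Finset

lemma not_bddAbove_range_of_forall_exists_add_le {u : ℕ → ℝ} {δ : ℝ} (hδ : 0 < δ)
    (h : ∀ n, ∃ N, u n + δ ≤ u N) : ¬BddAbove (Set.range u) := by
  intro hbdd
  obtain ⟨_, ⟨n, rfl⟩, hn⟩ :=
    exists_lt_of_lt_csSup (Set.range_nonempty u) (sub_lt_self (sSup (Set.range u)) hδ)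
  obtain ⟨N, hN⟩ := h n
  have := le_csSup hbdd (Set.mem_range_self N)
  linarith

section Density

variable {f : ℕ → ℝ} {b c : ℝ} {m : ℕ}

lemma exists_sum_Icc_add_le (hf : ∀ i, 0 ≤ f i) (hc : 0 < c) (hb : 0 < b)
    (hdens : ∀ N ≥ m, b * N ≤ ((Icc 1 N).filter fun i => 1 / (c * i) ≤ f i).card)
    (n : ℕ) : ∃ N, ∑ i ∈ Icc 1 n, f i + b / (2 * c) ≤ ∑ i ∈ Icc 1 N, f i := by
  obtain ⟨N, hNm, hNn, hNb⟩ := ((eventually_ge_atTop m).and ((eventually_gt_atTop n).and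
    (tendsto_natCast_atTop_atTop.eventually_ge_atTop (2 * n / b)))).exists
  refine ⟨N, ?_⟩
  have hN : (0 : ℝ) < N := by exact_mod_cast (Nat.zero_le n).trans_lt hNn
  set G := (Icc 1 N).filter fun i => 1 / (c * i) ≤ f i
  set T := G \ Icc 1 n
  have hT_card : b * N - n ≤ #T := by
    have hG : b * N ≤ #G := hdens N hNm
    have := card_le_card_sdiff_add_card (s := G) (t := Icc 1 n)
    rw [Nat.card_Icc, add_tsub_cancel_right] at this
    have : (#G : ℝ) ≤ #T + n := by exact_mod_cast this
    linarith
  have hT_mean : ∀ i ∈ T, 1 / (c * N) ≤ f i := by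
    intro i hi
    obtain ⟨hi, hgood⟩ := mem_filter.mp (mem_sdiff.mp hi).1
    obtain ⟨hi1, hiN⟩ := mem_Icc.mp hi
    refine (one_div_le_one_div_of_le ?_ ?_).trans hgood
    · exact mul_pos hc (by exact_mod_cast hi1)
    · gcongr
  have hT_sum : #T * (1 / (c * N)) ≤ ∑ i ∈ T, f i := by
    simpa [nsmul_eq_mul] using card_nsmul_le_sum T f _ hT_mean
  have hsplit : ∑ i ∈ Icc 1 n, f i + ∑ i ∈ T, f i ≤ ∑ i ∈ Icc 1 N, f i := by
    rw [← sum_union disjoint_sdiff]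
    refine sum_le_sum_of_subset_of_nonneg (union_subset ?_ ?_) fun i _ _ => hf i
    · exact Icc_subset_Icc_right hNn.le
    · exact sdiff_subset.trans (filter_subset _ _)
  have hgain : b / (2 * c) ≤ #T * (1 / (c * N)) := by
    rw [div_le_iff₀ hb] at hNb
    calc b / (2 * c) = (b * N / 2) * (1 / (c * N)) := by field_simp
      _ ≤ #T * (1 / (c * N)) := by gcongr; linarith
  linarith

lemma not_bddAbove_range_sum_Icc_of_density (hf : ∀ i, 0 ≤ f i) (hc : 0 < c) (hb : 0 < b)
    (hdens : ∀ N ≥ m, b * N ≤ ((Icc 1 N).filter fun i => 1 / (c * i) ≤ f i).card) :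
    ¬BddAbove (Set.range fun n => ∑ i ∈ Icc 1 n, f i) :=
  not_bddAbove_range_of_forall_exists_add_le (by positivity) (exists_sum_Icc_add_le hf hc hb hdens)

end Density

section Chebyshev

variable {Ω : Type*} [MeasurableSpace Ω] {P : Measure Ω} [IsFiniteMeasure P]
  {Y : ℕ → Ω → ℝ} {V : ℝ}

lemma measure_forall_le_eq_zero_of_bdd_variance (hY : ∀ n, MemLp (Y n) 2 P)
    (hE : ¬BddAbove (Set.range fun n => P[Y n])) (hV : ∀ n, variance (Y n) P ≤ V) (M : ℝ) :
    P {ω | ∀ n, Y n ω ≤ M} = 0 := by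
  have hbound : ∀ t > 0, P {ω | ∀ n, Y n ω ≤ M} ≤ ENNReal.ofReal (V / t ^ 2) := by
    intro t ht
    obtain ⟨_, ⟨n, rfl⟩, hn⟩ := not_bddAbove_iff.mp hE (M + t)
    calc P {ω | ∀ n, Y n ω ≤ M} ≤ P {ω | t ≤ |Y n ω - P[Y n]|} := by
          refine measure_mono fun ω hω => ?_
          have := hω n
          simp only [Set.mem_ofPred_eq]
          rw [abs_sub_comm, abs_of_nonneg (by linarith)]
          linarith
      _ ≤ ENNReal.ofReal (variance (Y n) P / t ^ 2) := meas_ge_le_variance_div_sq (hY n) ht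
      _ ≤ ENNReal.ofReal (V / t ^ 2) := by gcongr; exact hV n
  have hlim : Tendsto (fun t : ℝ => ENNReal.ofReal (V / t ^ 2)) atTop (nhds 0) := by
    rw [← ENNReal.ofReal_zero]
    exact ENNReal.tendsto_ofReal (tendsto_const_nhds.div_atTop (tendsto_pow_atTop two_ne_zero))
  exact nonpos_iff_eq_zero.mp (ge_of_tendsto hlim ((eventually_gt_atTop 0).mono hbound))

lemma ae_not_bddAbove_of_bdd_variance (hY : ∀ n, MemLp (Y n) 2 P)
    (hE : ¬BddAbove (Set.range fun n => P[Y n])) (hV : ∀ n, variance (Y n) P ≤ V) :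
    ∀ᵐ ω ∂P, ¬BddAbove (Set.range fun n => Y n ω) := by
  have : ∀ᵐ ω ∂P, ∀ M : ℕ, ¬∀ n, Y n ω ≤ M := by
    rw [ae_all_iff]
    refine fun M => ae_iff.mpr ?_
    simpa only [not_not] using measure_forall_le_eq_zero_of_bdd_variance hY hE hV M
  filter_upwards [this] with ω hω ⟨L, hL⟩
  exact hω ⌈L⌉₊ fun n => (hL (Set.mem_range_self n)).trans (Nat.le_ceil L)

end Chebyshev

lemma variance_sum_le_tsum {Ω ι : Type*} [MeasurableSpace Ω] {P : Measure Ω}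
    [IsFiniteMeasure P] {X : ι → Ω → ℝ} (hX : ∀ i, MemLp (X i) 2 P)
    (hindep : Pairwise fun i j => IndepFun (X i) (X j) P)
    (hvar : Summable fun i => variance (X i) P) (s : Finset ι) :
    variance (fun ω => ∑ i ∈ s, X i ω) P ≤ ∑' i, variance (X i) P := by
  rw [← sum_fn, IndepFun.variance_sum (fun i _ => hX i) fun i _ j _ hij => hindep hij]
  exact hvar.sum_le_tsum s fun i _ => variance_nonneg _ _

theorem partial_sums_tendsto_atTop_ae_of_pos_density_mean_lower_bound_general
    {Ω : Type*} [MeasurableSpace Ω] (P : Measure Ω) [IsProbabilityMeasure P]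
    (c : ℝ) (hc : 0 < c)
    (b : ℝ) (hb : b ∈ Set.Ioc (0 : ℝ) 1) (m : ℕ)
    (X : ℕ → Ω → ℝ)
    (hindep : ProbabilityTheory.iIndepFun X P)
    (hnonneg : ∀ i ω, 0 ≤ X i ω)
    (hL2 : ∀ i, MemLp (X i) 2 P)
    (hvar : Summable fun i => ProbabilityTheory.variance (X i) P)
    (hdens : ∀ n ≥ m,
      b * n ≤ (((Finset.Icc 1 n).filter
        (fun i => 1 / (c * i) ≤ ∫ ω, X i ω ∂P)).card : ℝ)) :
    ∀ᵐ ω ∂P, Tendsto (fun n => ∑ i ∈ Finset.Icc 1 n, X i ω) atTop atTop := by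
  have hmean : ∀ n, P[fun ω => ∑ i ∈ Icc 1 n, X i ω] = ∑ i ∈ Icc 1 n, P[X i] := fun n =>
    integral_finsetSum _ fun i _ => (hL2 i).integrable one_le_two
  have hmean_unbdd : ¬BddAbove (Set.range fun n => P[fun ω => ∑ i ∈ Icc 1 n, X i ω]) := by
    simpa only [hmean] using not_bddAbove_range_sum_Icc_of_density
      (fun i => integral_nonneg (hnonneg i)) hc hb.1 hdens
  have hunbdd := ae_not_bddAbove_of_bdd_variance
    (fun n => memLp_finsetSum (Icc 1 n) fun i _ => hL2 i) hmean_unbdd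
    (fun n => variance_sum_le_tsum hL2 (fun i j hij => hindep.indepFun hij) hvar (Icc 1 n))
  filter_upwards [hunbdd] with ω hω
  have hmono : Monotone fun n => ∑ i ∈ Icc 1 n, X i ω := fun p q hpq =>
    sum_le_sum_of_subset_of_nonneg (Icc_subset_Icc_right hpq) fun i _ _ => hnonneg i ω
  refine hmono.tendsto_atTop_atTop_iff.mpr fun L => ?_
  obtain ⟨_, ⟨n, rfl⟩, hn⟩ := not_bddAbove_iff.mp hω L
  exact ⟨n, hn.le⟩

/-- Abstraction of Lemma 1: independent nonnegative square-integrable random variables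
with summable variances, such that for all large `n` at least `b * n` of the indices
`i ∈ {1, …, n}` satisfy `E[X i] ≥ 1 / (c * i)`, have almost surely divergent partial
sums. -/
theorem partial_sums_tendsto_atTop_ae_of_pos_density_mean_lower_bound
    {Ω : Type*} [MeasurableSpace Ω] (P : Measure Ω) [IsProbabilityMeasure P]
    (a c : ℝ) (ha : 0 < a) (hc : 0 < c)
    (b : ℝ) (hb : b ∈ Set.Ioc (0 : ℝ) 1) (m : ℕ)
    (X : ℕ → Ω → ℝ)
    (hmeas : ∀ i, Measurable (X i))
    (hindep : ProbabilityTheory.iIndepFun X P)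
    (hnonneg : ∀ i ω, 0 ≤ X i ω)
    (hL2 : ∀ i, MemLp (X i) 2 P)
    (hvar : Summable fun i => ProbabilityTheory.variance (X i) P)
    (hdens : ∀ n ≥ m,
      b * n ≤ (((Finset.Icc 1 n).filter
        (fun i => 1 / (c * i) ≤ ∫ ω, X i ω ∂P)).card : ℝ)) :
    ∀ᵐ ω ∂P, Tendsto (fun n => ∑ i ∈ Finset.Icc 1 n, X i ω) atTop atTop :=
  partial_sums_tendsto_atTop_ae_of_pos_density_mean_lower_bound_general P c hc b hb m X hindep
    hnonneg hL2 hvar hdens
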